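/- arXiv:2011.08887 — 5 statements merged into one kernel-verified Lean document; each statement's English description precedes it below -/
import Mathlib

section
/- Let k be a field of characteristic p > 0, let φ : k → k be the Frobenius map x ↦ x^p, and let R ∈ k^N be a vector such that the N vectors R, φ(R), ..., φ^{N-1}(R) (Frobenius applied coordinatewise) form a basis of k^N over k. Then for every nonzero vector v ∈ F_p^N (viewed inside k^N), the dot product R · v is nonzero. -/
/-!
If `R ⬝ᵥ w = 0` for an `𝔽_p`-rational `w`, then applying `x ↦ x ^ p ^ i`, which is a ring
endomorphism fixing the coordinates of `w`, gives `φ^i(R) ⬝ᵥ w = 0` for every `i`. As the twists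
`φ^i(R)` span `k^N`, the vector `w` is orthogonal to everything and hence vanishes.
-/

open Matrix

theorem eq_zero_of_dotProduct_eq_zero_of_span_eq_top {R ι : Type*} [CommSemiring R] [Fintype ι]
    {s : Set (ι → R)} (hs : Submodule.span R s = ⊤) {w : ι → R} (h : ∀ x ∈ s, x ⬝ᵥ w = 0) :
    w = 0 := by
  refine dotProduct_eq_zero w fun u => ?_
  have hker : s ⊆ LinearMap.ker (dotProductBilin R R w) := fun x hx => by
    simpa [dotProduct_comm] using h x hx
  have hu : u ∈ Submodule.span R s := hs ▸ Submodule.mem_top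
  exact Submodule.span_le.mpr hker hu

theorem iterateFrobenius_castHom_zmod (p : ℕ) [Fact p.Prime] {k : Type*} [CommRing k] [CharP k p]
    (n : ℕ) (a : ZMod p) :
    iterateFrobenius k p n (ZMod.castHom (dvd_refl p) k a) = ZMod.castHom (dvd_refl p) k a := by
  rw [iterateFrobenius_def, ← map_pow, ZMod.pow_card_pow]

theorem dotProduct_ne_zero_of_frobenius_basis_general
    (p : ℕ) [Fact p.Prime] (k : Type*) [Field k] [CharP k p] (N : ℕ)
    (R : Fin N → k)
    (hsp : Submodule.span k
        (Set.range (fun i : Fin N => fun j : Fin N => R j ^ p ^ (i : ℕ))) = ⊤) :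
    ∀ v : Fin N → ZMod p, v ≠ 0 →
      (∑ j : Fin N, R j * (ZMod.castHom (dvd_refl p) k) (v j)) ≠ 0 := by
  intro v hv hRw
  set w : Fin N → k := ZMod.castHom (dvd_refl p) k ∘ v
  have htwist : ∀ i : Fin N, (fun j => R j ^ p ^ (i : ℕ)) ⬝ᵥ w = 0 := fun i => by
    have hfix : iterateFrobenius k p i ∘ w = w :=
      funext fun j => iterateFrobenius_castHom_zmod p i (v j)
    have := RingHom.map_dotProduct (iterateFrobenius k p i) R w
    rwa [hfix, show R ⬝ᵥ w = 0 from hRw, map_zero, eq_comm] at this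
  have hw : w = 0 :=
    eq_zero_of_dotProduct_eq_zero_of_span_eq_top hsp (Set.forall_mem_range.mpr htwist)
  exact hv (funext fun j =>
    (map_eq_zero_iff _ (ZMod.castHom (dvd_refl p) k).injective).mp (congrFun hw j))

/-- Let `k` have characteristic `p > 0` and let `R ∈ k^N` be a vector whose Frobenius
twists `R, φ(R), …, φ^{N-1}(R)` (coordinatewise `x ↦ x^p`) form a `k`-basis of `k^N`.
Then for every nonzero `𝔽_p`-rational vector `v`, the dot product `R · v` is nonzero. -/
theorem dotProduct_ne_zero_of_frobenius_basis
    (p : ℕ) [Fact p.Prime] (k : Type*) [Field k] [CharP k p] (N : ℕ)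
    (R : Fin N → k)
    (hli : LinearIndependent k (fun i : Fin N => fun j : Fin N => R j ^ p ^ (i : ℕ)))
    (hsp : Submodule.span k
        (Set.range (fun i : Fin N => fun j : Fin N => R j ^ p ^ (i : ℕ))) = ⊤) :
    ∀ v : Fin N → ZMod p, v ≠ 0 →
      (∑ j : Fin N, R j * (ZMod.castHom (dvd_refl p) k) (v j)) ≠ 0 :=
  dotProduct_ne_zero_of_frobenius_basis_general p k N R hsp
end

section
/- Let k be a field of characteristic p > 0, let φ : k → k be Frobenius, and let R ∈ k^N be such that R, φ(R), ..., φ^{N-1}(R) form a k-basis of k^N. If z_1, ..., z_N is a basis of F_p^N over F_p, then the elements R · z_1, ..., R · z_N of k are linearly independent over F_p. -/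
/-- Let `k` have characteristic `p > 0` and let `R ∈ k^N` be such that the Frobenius
twists `R, φ(R), …, φ^{N-1}(R)` form a `k`-basis of `k^N`.  If `z 1, …, z N` is an
`𝔽_p`-basis of `𝔽_p^N`, then `R · z 1, …, R · z N ∈ k` are linearly independent
over `𝔽_p`. -/
theorem dotProducts_linearIndependent_of_frobenius_basis
    (p : ℕ) [Fact p.Prime] (k : Type*) [Field k] [CharP k p] (N : ℕ)
    (R : Fin N → k)
    (hli : LinearIndependent k (fun i : Fin N => fun j : Fin N => R j ^ p ^ (i : ℕ)))
    (hsp : Submodule.span k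
        (Set.range (fun i : Fin N => fun j : Fin N => R j ^ p ^ (i : ℕ))) = ⊤)
    (z : Fin N → (Fin N → ZMod p))
    (hzli : LinearIndependent (ZMod p) z)
    (hzsp : Submodule.span (ZMod p) (Set.range z) = ⊤) :
    letI := ZMod.algebra k p
    LinearIndependent (ZMod p)
      (fun i : Fin N => ∑ j : Fin N, R j * (ZMod.castHom (dvd_refl p) k) (z i j)) := by
  letI := ZMod.algebra k p
  rw [Fintype.linearIndependent_iff]
  intro c hc
  set σ : ZMod p →+* k := ZMod.castHom (dvd_refl p) k with hσ
  set w : Fin N → ZMod p := fun j => ∑ i, c i * z i j with hw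
  have halg : ∀ a : ZMod p, algebraMap (ZMod p) k a = σ a := fun a => rfl
  have h0 : ∑ j, R j * σ (w j) = 0 := by
    rw [← hc]
    simp only [hw, map_sum, map_mul, Finset.mul_sum, Algebra.smul_def, halg,
      Finset.sum_mul]
    rw [Finset.sum_comm]
    refine Finset.sum_congr rfl fun i _ => Finset.sum_congr rfl fun j _ => by ring
  have key : ∀ m : ℕ, ∑ j, R j ^ p ^ m * σ (w j) = 0 := by
    intro m
    have := congrArg (· ^ p ^ m) h0
    simp only [zero_pow (pow_ne_zero m (Fact.out (p := p.Prime)).ne_zero)] at this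
    rw [sum_pow_char_pow] at this
    simpa only [mul_pow, ← map_pow, ZMod.pow_card_pow] using this
  -- linear functional
  let L : (Fin N → k) →ₗ[k] k :=
    { toFun := fun x => ∑ j, x j * σ (w j)
      map_add' := by intro x y; simp [add_mul, Finset.sum_add_distrib]
      map_smul' := by intro a x; simp [Finset.mul_sum, mul_assoc] }
  have hL : L = 0 := by
    apply LinearMap.ext_on hsp
    rintro x ⟨i, rfl⟩
    exact key i
  have hw0 : ∀ j, w j = 0 := by
    intro j
    have h1 : L (Pi.single j 1) = 0 := by rw [hL]; rfl
    have h2 : L (Pi.single j 1) = σ (w j) := by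
      simp only [L, LinearMap.coe_mk, AddHom.coe_mk]
      rw [Finset.sum_eq_single j]
      · simp
      · intro b _ hb; simp [Pi.single_apply, hb]
      · simp
    have h3 : σ (w j) = 0 := by rw [← h2, h1]
    exact σ.injective (by rw [h3, map_zero])
  intro i
  refine Fintype.linearIndependent_iff.mp hzli c ?_ i
  funext j
  simpa [hw, Finset.sum_apply] using hw0 j
end

section
/- Let k be a field of characteristic p > 0, let φ be the Frobenius, and let R ∈ k^{2n} be such that R, φ(R), ..., φ^{2n-1}(R) form a k-basis of k^{2n}. Let α_0, ..., α_n ∈ k, not all zero, and set S = Σ_{i=0}^n α_i φ^i(R). Then the set {v ∈ F_p^{2n} : S · v = 0} is an F_p-subspace of dimension at most n. -/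
open Polynomial Finset

/-- Let `k` have characteristic `p > 0`, let `R ∈ k^{2n}` be such that the Frobenius
twists `R, φ(R), …, φ^{2n-1}(R)` form a `k`-basis of `k^{2n}`, and let
`α 0, …, α n ∈ k` be not all zero.  With `S = ∑ i, α i • φ^i(R)`, the set of
`𝔽_p`-rational vectors `v` with `S · v = 0` is an `𝔽_p`-subspace of dimension
at most `n`. -/
theorem kernel_of_frobenius_combination_finrank_le
    (p : ℕ) [Fact p.Prime] (k : Type*) [Field k] [CharP k p] (n : ℕ)
    (R : Fin (2 * n) → k)
    (hli : LinearIndependent k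
        (fun i : Fin (2 * n) => fun j : Fin (2 * n) => R j ^ p ^ (i : ℕ)))
    (hsp : Submodule.span k
        (Set.range (fun i : Fin (2 * n) => fun j : Fin (2 * n) => R j ^ p ^ (i : ℕ))) = ⊤)
    (α : Fin (n + 1) → k) (hα : α ≠ 0) :
    ∃ W : Submodule (ZMod p) (Fin (2 * n) → ZMod p),
      (W : Set (Fin (2 * n) → ZMod p)) =
        {v : Fin (2 * n) → ZMod p |
          ∑ j : Fin (2 * n),
            (∑ i : Fin (n + 1), α i * R j ^ p ^ (i : ℕ)) *
              (ZMod.castHom (dvd_refl p) k) (v j) = 0} ∧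
      Module.finrank (ZMod p) W ≤ n := by
  classical
  have hp : 1 < p := (Fact.out : p.Prime).one_lt
  set c : ZMod p →+* k := ZMod.castHom (dvd_refl p) k with hc
  have hcinj : Function.Injective c := c.injective
  set S : Fin (2 * n) → k := fun j => ∑ i : Fin (n + 1), α i * R j ^ p ^ (i : ℕ) with hS
  -- the candidate subspace
  set W : Submodule (ZMod p) (Fin (2 * n) → ZMod p) :=
    { carrier := {v | ∑ j : Fin (2 * n), S j * c (v j) = 0}
      add_mem' := by
        intro a b ha hb
        simp only [Set.mem_setOf_eq] at ha hb ⊢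
        simp only [Pi.add_apply, map_add, mul_add, Finset.sum_add_distrib, ha, hb, add_zero]
      zero_mem' := by simp
      smul_mem' := by
        intro t a ha
        simp only [Set.mem_setOf_eq] at ha ⊢
        have : ∑ j : Fin (2 * n), S j * c ((t • a) j)
            = c t * ∑ j : Fin (2 * n), S j * c (a j) := by
          rw [Finset.mul_sum]
          refine Finset.sum_congr rfl fun j _ => ?_
          simp [Pi.smul_apply, smul_eq_mul, map_mul]
          ring
        rw [this, ha, mul_zero] } with hW
  refine ⟨W, rfl, ?_⟩
  -- cast of a ZMod p element is fixed by p-power Frobenius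
  have hfix : ∀ (x : ZMod p) (m : ℕ), (c x) ^ p ^ m = c x := by
    intro x m
    rw [← map_pow, ZMod.pow_card_pow]
  -- key injectivity: if Σ R j * c (u j) = 0 then u = 0
  have hkey : ∀ u : Fin (2 * n) → ZMod p,
      (∑ j : Fin (2 * n), R j * c (u j)) = 0 → u = 0 := by
    intro u hu
    have hpow : ∀ i : Fin (2 * n),
        (∑ j : Fin (2 * n), R j ^ p ^ (i : ℕ) * c (u j)) = 0 := by
      intro i
      have := congrArg (· ^ p ^ (i : ℕ)) hu
      simp only [zero_pow (pow_ne_zero _ (Nat.Prime.ne_zero Fact.out))] at this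
      rw [sum_pow_char_pow] at this
      calc (∑ j : Fin (2 * n), R j ^ p ^ (i : ℕ) * c (u j))
          = ∑ j : Fin (2 * n), (R j * c (u j)) ^ p ^ (i : ℕ) := by
            refine Finset.sum_congr rfl fun j _ => ?_
            rw [mul_pow, hfix]
        _ = 0 := this
    -- the linear functional x ↦ Σ x j * c (u j)
    let D : (Fin (2 * n) → k) →ₗ[k] k :=
      { toFun := fun x => ∑ j : Fin (2 * n), x j * c (u j)
        map_add' := by
          intro x y
          simp [Pi.add_apply, add_mul, Finset.sum_add_distrib]
        map_smul' := by
          intro t x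
          simp [Finset.mul_sum, mul_assoc] }
    have hD : D = 0 := by
      have hle : Submodule.span k
          (Set.range (fun i : Fin (2 * n) => fun j : Fin (2 * n) => R j ^ p ^ (i : ℕ)))
          ≤ LinearMap.ker D := by
        rw [Submodule.span_le]
        rintro _ ⟨i, rfl⟩
        simpa [D] using hpow i
      rw [hsp, top_le_iff] at hle
      exact LinearMap.ker_eq_top.mp hle
    funext j
    have := LinearMap.congr_fun hD (Pi.single j (1 : k))
    simp only [D, LinearMap.zero_apply, LinearMap.coe_mk, AddHom.coe_mk] at this
    have hj : (∑ j' : Fin (2 * n), (Pi.single j (1 : k) : Fin (2 * n) → k) j' * c (u j')) = c (u j) := by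
      rw [Finset.sum_eq_single j]
      · simp
      · intro b _ hb; simp [Pi.single_apply, hb.symm]
      · simp
    rw [hj] at this
    exact hcinj (by simpa using this)
  -- the polynomial f = Σ α i X^(p^i)
  set F : Polynomial k := ∑ i : Fin (n + 1), C (α i) * X ^ (p ^ (i : ℕ)) with hF
  obtain ⟨i0, hi0⟩ := Function.ne_iff.mp hα
  have hcoeff : F.coeff (p ^ (i0 : ℕ)) = α i0 := by
    rw [hF, Polynomial.finset_sum_coeff]
    rw [Finset.sum_eq_single i0]
    · simp
    · intro b _ hb
      have : p ^ (i0 : ℕ) ≠ p ^ (b : ℕ) := by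
        intro h
        exact hb (Fin.ext (Nat.pow_right_injective hp h.symm))
      simp [Polynomial.coeff_C_mul, Polynomial.coeff_X_pow, this]
    · simp
  have hF0 : F ≠ 0 := fun h => hi0 (by simpa [h] using hcoeff.symm)
  have hdeg : F.natDegree ≤ p ^ n := by
    refine Polynomial.natDegree_sum_le_of_forall_le _ _ fun i _ => ?_
    refine (Polynomial.natDegree_C_mul_X_pow_le _ _).trans ?_
    exact Nat.pow_le_pow_right (Nat.zero_lt_one.trans hp) (Fin.is_le i)
  -- the injection from W into the roots of F
  have hroot : ∀ v : W, F.IsRoot (∑ j : Fin (2 * n), R j * c ((v : Fin (2 * n) → ZMod p) j)) := by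
    rintro ⟨v, hv⟩
    have hv' : ∑ j : Fin (2 * n), S j * c (v j) = 0 := hv
    simp only [Polynomial.IsRoot, hF, Polynomial.eval_finset_sum, Polynomial.eval_mul,
      Polynomial.eval_C, Polynomial.eval_pow, Polynomial.eval_X]
    calc ∑ i : Fin (n + 1), α i * (∑ j : Fin (2 * n), R j * c (v j)) ^ p ^ (i : ℕ)
        = ∑ i : Fin (n + 1), ∑ j : Fin (2 * n), α i * (R j ^ p ^ (i : ℕ) * c (v j)) := by
          refine Finset.sum_congr rfl fun i _ => ?_
          rw [sum_pow_char_pow, Finset.mul_sum]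
          refine Finset.sum_congr rfl fun j _ => ?_
          rw [mul_pow, hfix]
      _ = ∑ j : Fin (2 * n), S j * c (v j) := by
          rw [Finset.sum_comm]
          refine Finset.sum_congr rfl fun j _ => ?_
          rw [hS, Finset.sum_mul]
          exact Finset.sum_congr rfl fun i _ => by ring
      _ = 0 := hv'
  letI : Fintype W := Fintype.ofFinite W
  have hcard : Fintype.card W ≤ p ^ n := by
    have hinj : Function.Injective
        (fun v : W => (⟨∑ j : Fin (2 * n), R j * c ((v : Fin (2 * n) → ZMod p) j),
          Multiset.mem_toFinset.mpr (Polynomial.mem_roots'.mpr ⟨hF0, hroot v⟩)⟩ :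
          {x // x ∈ F.roots.toFinset})) := by
      rintro ⟨v, hv⟩ ⟨w, hw⟩ h
      have h' : (∑ j : Fin (2 * n), R j * c (v j))
          = ∑ j : Fin (2 * n), R j * c (w j) := congrArg Subtype.val h
      have : ∑ j : Fin (2 * n), R j * c ((v - w) j) = 0 := by
        simp only [Pi.sub_apply, map_sub, mul_sub, Finset.sum_sub_distrib, h', sub_self]
      have := hkey _ this
      exact Subtype.ext (sub_eq_zero.mp this)
    calc Fintype.card W ≤ Fintype.card {x // x ∈ F.roots.toFinset} :=
          Fintype.card_le_of_injective _ hinj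
      _ = F.roots.toFinset.card := Fintype.card_coe _
      _ ≤ Multiset.card F.roots := Multiset.toFinset_card_le _
      _ ≤ F.natDegree := Polynomial.card_roots' F
      _ ≤ p ^ n := hdeg
  have hcard' : Fintype.card W = p ^ Module.finrank (ZMod p) W := by
    have := Module.card_eq_pow_finrank (K := ZMod p) (V := W)
    rwa [ZMod.card] at this
  rw [hcard'] at hcard
  exact (Nat.pow_le_pow_iff_right hp).mp hcard
end

section
/- Fix an integer p ≥ 2, an integer N ≥ 2, and positive integers a_1, ..., a_N. For a tuple I = (i_1, ..., i_r) ∈ {1, ..., N}^r define ν(I) = Σ_{j=1}^r p^{i_1 + ⋯ + i_{j-1}} · a_{i_j} (with the empty sum in the exponent equal to 0 for j = 1). If I = (i_1, ..., i_r) minimizes ν over all tuples in {1, ..., N}^r, then i_1 ≤ i_2 ≤ ⋯ ≤ i_r and a_{i_1} ≥ a_{i_2} ≥ ⋯ ≥ a_{i_r}. -/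
/-- The valuation `ν(I) = ∑_{j=1}^r p^(i_1 + ⋯ + i_{j-1}) · a_{i_j}` of a tuple
`I ∈ {1,…,N}^r`, where the entry `I j : Fin N` represents the value `(I j) + 1`. -/
def tupleVal (p : ℕ) {N r : ℕ} (a : Fin N → ℕ) (I : Fin r → Fin N) : ℕ :=
  ∑ j : Fin r, p ^ (∑ l ∈ Finset.Iio j, ((I l : ℕ) + 1)) * a (I j)

/-!
Let `I` minimize `ν` and compare it with the tuple obtained by replacing two adjacent entries
`i_j, i_{j+1}` by a common value `c ≤ min(i_j, i_{j+1})`. Every exponent can only drop, so all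
other terms do not grow, and after dividing by the common factor `p^(i_1 + ⋯ + i_{j-1})`
minimality gives `a_{i_j} + p^{i_j} a_{i_{j+1}} ≤ a_c + p^c a_c`. If `i_j > i_{j+1}`, the choice
`c = i_{j+1}` contradicts `p ≥ 2` and `a_{i_j} > 0`; if `i_j ≤ i_{j+1}`, the choice `c = i_j`
gives `a_{i_{j+1}} ≤ a_{i_j}`.
-/

open Finset

namespace TupleVal

variable {N r : ℕ}

def prefixWeight (I : Fin r → Fin N) (j : Fin r) : ℕ :=
  ∑ l ∈ Iio j, ((I l : ℕ) + 1)

lemma prefixWeight_mono {I J : Fin r → Fin N} (hJI : J ≤ I) (j : Fin r) :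
    prefixWeight J j ≤ prefixWeight I j :=
  sum_le_sum fun l _ => Nat.add_le_add_right (hJI l) 1

lemma prefixWeight_congr {I J : Fin r → Fin N} {j : Fin r} (h : ∀ l < j, J l = I l) :
    prefixWeight J j = prefixWeight I j :=
  sum_congr rfl fun l hl => by rw [h l (mem_Iio.1 hl)]

lemma prefixWeight_of_covBy (I : Fin r → Fin N) {j k : Fin r} (hjk : j ⋖ k) :
    prefixWeight I k = prefixWeight I j + ((I j : ℕ) + 1) := by
  have hIio : Iio k = insert j (Iio j) := by
    rw [Iio_insert]; exact coe_injective (by simpa using hjk.Iio_eq)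
  rw [prefixWeight, hIio, sum_insert notMem_Iio_self, add_comm]
  rfl

variable (p : ℕ) (a : Fin N → ℕ)

lemma tupleVal_eq_sum (I : Fin r → Fin N) :
    tupleVal p a I = ∑ j, p ^ prefixWeight I j * a (I j) := rfl

lemma sum_le_sum_of_tupleVal_le {I J : Fin r → Fin N} (hp : 0 < p) (hJI : J ≤ I)
    (s : Finset (Fin r)) (hs : ∀ l ∉ s, J l = I l)
    (hIJ : tupleVal p a I ≤ tupleVal p a J) :
    ∑ l ∈ s, p ^ prefixWeight I l * a (I l) ≤
      ∑ l ∈ s, p ^ prefixWeight J l * a (J l) := by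
  rw [tupleVal_eq_sum, tupleVal_eq_sum, ← sum_add_sum_compl s, ← sum_add_sum_compl s] at hIJ
  have hcompl : ∑ l ∈ sᶜ, p ^ prefixWeight J l * a (J l)
      ≤ ∑ l ∈ sᶜ, p ^ prefixWeight I l * a (I l) := by
    refine sum_le_sum fun l hl => ?_
    rw [hs l (mem_compl.1 hl)]
    exact Nat.mul_le_mul_right _ (Nat.pow_le_pow_right hp (prefixWeight_mono hJI l))
  omega

lemma minimizer_add_pow_mul_le_of_covBy {I : Fin r → Fin N} (hp : 0 < p)
    (hmin : ∀ J : Fin r → Fin N, tupleVal p a I ≤ tupleVal p a J)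
    {j k : Fin r} (hjk : j ⋖ k)
    {c : Fin N} (hcj : c ≤ I j) (hck : c ≤ I k) :
    a (I j) + p ^ ((I j : ℕ) + 1) * a (I k) ≤ a c + p ^ ((c : ℕ) + 1) * a c := by
  set s : Finset (Fin r) := {j, k}
  set J := s.piecewise (fun _ => c) I
  have hJ_mem (l : Fin r) (hl : l ∈ s) : J l = c := piecewise_eq_of_mem _ _ _ hl
  have hJ_notMem (l : Fin r) (hl : l ∉ s) : J l = I l := piecewise_eq_of_notMem _ _ _ hl
  have hJI : J ≤ I := fun l => by
    by_cases hl : l ∈ s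
    · rw [hJ_mem l hl]
      rcases mem_insert.1 hl with rfl | hl
      exacts [hcj, mem_singleton.1 hl ▸ hck]
    · rw [hJ_notMem l hl]
  have hpair := sum_le_sum_of_tupleVal_le p a hp hJI s hJ_notMem (hmin J)
  have hJ_weight : prefixWeight J j = prefixWeight I j :=
    prefixWeight_congr fun l hl => hJ_notMem l (by
      simp only [s, mem_insert, mem_singleton, not_or]
      exact ⟨hl.ne, (hl.trans hjk.lt).ne⟩)
  have hfactor (u v : ℕ) :
      p ^ (prefixWeight I j + u) * v = p ^ prefixWeight I j * (p ^ u * v) := by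
    rw [pow_add, mul_assoc]
  rw [sum_pair hjk.ne, sum_pair hjk.ne, prefixWeight_of_covBy I hjk, prefixWeight_of_covBy J hjk,
    hJ_weight, hJ_mem j (by simp [s]), hJ_mem k (by simp [s]), hfactor, hfactor, ← mul_add,
    ← mul_add] at hpair
  exact Nat.le_of_mul_le_mul_left hpair (Nat.pow_pos hp)

lemma minimizer_apply_le_of_covBy {I : Fin r → Fin N} (hp : 2 ≤ p) (ha : ∀ i, 0 < a i)
    (hmin : ∀ J : Fin r → Fin N, tupleVal p a I ≤ tupleVal p a J)
    {j k : Fin r} (hjk : j ⋖ k) : I j ≤ I k := by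
  by_contra! hlt
  have hkey := minimizer_add_pow_mul_le_of_covBy p a (by omega) hmin hjk hlt.le le_rfl
  set x := (I j : ℕ)
  set y := (I k : ℕ)
  have hpow : p ^ (y + 1) * 2 ≤ p ^ (x + 1) :=
    calc p ^ (y + 1) * 2 ≤ p ^ (y + 1) * p := Nat.mul_le_mul_left _ hp
      _ = p ^ (y + 2) := (pow_succ p (y + 1)).symm
      _ ≤ p ^ (x + 1) := Nat.pow_le_pow_right (by omega) (by omega)
  have hone : 1 ≤ p ^ (y + 1) := Nat.one_le_pow _ _ (by omega)
  linarith [Nat.mul_le_mul_right (a (I k)) hpow, Nat.mul_le_mul_right (a (I k)) hone, ha (I j)]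

lemma minimizer_weight_le_of_covBy {I : Fin r → Fin N} (hp : 0 < p)
    (hmin : ∀ J : Fin r → Fin N, tupleVal p a I ≤ tupleVal p a J)
    {j k : Fin r} (hjk : j ⋖ k) (hle : I j ≤ I k) : a (I k) ≤ a (I j) :=
  Nat.le_of_mul_le_mul_left (Nat.le_of_add_le_add_left
    (minimizer_add_pow_mul_le_of_covBy p a hp hmin hjk le_rfl hle)) (Nat.pow_pos hp)

end TupleVal

theorem minimizer_monotone_antitone_general
    (p N r : ℕ) (hp : 2 ≤ p)
    (a : Fin N → ℕ) (ha : ∀ i, 0 < a i)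
    (I : Fin r → Fin N)
    (hmin : ∀ J : Fin r → Fin N, tupleVal p a I ≤ tupleVal p a J) :
    Monotone I ∧ (∀ j l : Fin r, j ≤ l → a (I l) ≤ a (I j)) := by
  have hmono : Monotone I := (monotone_iff_forall_covBy I).2 fun _ _ hjk =>
    TupleVal.minimizer_apply_le_of_covBy p a hp ha hmin hjk
  have hanti : Antitone (a ∘ I) := (antitone_iff_forall_covBy (a ∘ I)).2 fun _ _ hjk =>
    TupleVal.minimizer_weight_le_of_covBy p a (by omega) hmin hjk (hmono hjk.le)
  exact ⟨hmono, fun _ _ hjl => hanti hjl⟩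

/-- If `p ≥ 2`, `N ≥ 2`, the `a i` are positive, and `I` minimizes `ν` over all tuples
in `{1,…,N}^r`, then the entries of `I` are nondecreasing and the values `a (I j)`
are nonincreasing. -/
theorem minimizer_monotone_antitone
    (p N r : ℕ) (hp : 2 ≤ p) (hN : 2 ≤ N) (hr : 1 ≤ r)
    (a : Fin N → ℕ) (ha : ∀ i, 0 < a i)
    (I : Fin r → Fin N)
    (hmin : ∀ J : Fin r → Fin N, tupleVal p a I ≤ tupleVal p a J) :
    Monotone I ∧ (∀ j l : Fin r, j ≤ l → a (I l) ≤ a (I j)) :=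
  minimizer_monotone_antitone_general p N r hp a ha I hmin
end

section
/- Fix an integer p ≥ 2, an integer N ≥ 2, positive integers a_1, ..., a_N, and define ν(I) = Σ_{j=1}^r p^{i_1 + ⋯ + i_{j-1}} a_{i_j} for I = (i_1,...,i_r) ∈ {1,...,N}^r. If I = (i_1,...,i_r) and J = (j_1,...,j_r) both minimize ν over {1,...,N}^r, then every componentwise mixture (l_1,...,l_r), where each l_α ∈ {i_α, j_α}, also minimizes ν. -/
lemma Iio_succ_eq {n : ℕ} (j : Fin n) :
    Finset.Iio (j.succ) = insert 0 ((Finset.Iio j).map (Fin.succEmb n)) := by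
  ext l
  simp only [Finset.mem_Iio, Finset.mem_insert, Finset.mem_map, Fin.succEmb,
    Function.Embedding.coeFn_mk]
  induction l using Fin.cases with
  | zero => simp [Fin.pos_iff_ne_zero, Fin.succ_ne_zero]
  | succ k => simp [Fin.succ_lt_succ_iff, Fin.succ_ne_zero, Fin.succ_inj]

lemma tupleVal_cons (p : ℕ) {N r : ℕ} (a : Fin N → ℕ) (K : Fin (r+1) → Fin N) :
    tupleVal p a K = a (K 0) + p ^ ((K 0 : ℕ) + 1) * tupleVal p a (Fin.tail K) := by
  rw [tupleVal, tupleVal, Fin.sum_univ_succ]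
  congr 1
  · rw [show (Finset.Iio (0 : Fin (r+1))) = ∅ from by
      simp [Finset.eq_empty_iff_forall_notMem, Fin.not_lt_zero]]
    simp
  · rw [Finset.mul_sum]
    refine Finset.sum_congr rfl fun j _ => ?_
    rw [← mul_assoc, ← pow_add]
    congr 2
    rw [Iio_succ_eq, Finset.sum_insert (by simp [Fin.succ_ne_zero]), Finset.sum_map]
    simp [Fin.tail, add_comm]

lemma key (p : ℕ) (hp : 0 < p) {N : ℕ} (a : Fin N → ℕ) :
    ∀ (r : ℕ) (I J : Fin r → Fin N),
      (∀ K : Fin r → Fin N, tupleVal p a I ≤ tupleVal p a K) →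
      (∀ K : Fin r → Fin N, tupleVal p a J ≤ tupleVal p a K) →
      ∀ L : Fin r → Fin N, (∀ α, L α = I α ∨ L α = J α) →
      ∀ K : Fin r → Fin N, tupleVal p a L ≤ tupleVal p a K := by
  intro r
  induction r with
  | zero =>
    intro I J _ _ L _ K
    simp [tupleVal]
  | succ r ih =>
    intro I J hI hJ L hL K
    have hpow : ∀ i : Fin N, 0 < p ^ ((i : ℕ) + 1) := fun i => pow_pos hp _
    -- tails of minimizers are minimizers
    have hI' : ∀ T : Fin r → Fin N, tupleVal p a (Fin.tail I) ≤ tupleVal p a T := by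
      intro T
      have h := hI (Fin.cons (I 0) T)
      rw [tupleVal_cons, tupleVal_cons, Fin.cons_zero, Fin.tail_cons] at h
      exact Nat.le_of_mul_le_mul_left (Nat.le_of_add_le_add_left h) (hpow (I 0))
    have hJ' : ∀ T : Fin r → Fin N, tupleVal p a (Fin.tail J) ≤ tupleVal p a T := by
      intro T
      have h := hJ (Fin.cons (J 0) T)
      rw [tupleVal_cons, tupleVal_cons, Fin.cons_zero, Fin.tail_cons] at h
      exact Nat.le_of_mul_le_mul_left (Nat.le_of_add_le_add_left h) (hpow (J 0))
    have hJI : tupleVal p a (Fin.tail J) = tupleVal p a (Fin.tail I) :=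
      le_antisymm (hJ' _) (hI' _)
    -- tail of L is a mixture of the tails
    have hL' : ∀ T : Fin r → Fin N, tupleVal p a (Fin.tail L) ≤ tupleVal p a T :=
      ih (Fin.tail I) (Fin.tail J) hI' hJ' (Fin.tail L) (fun α => hL α.succ)
    have hLt : tupleVal p a (Fin.tail L) = tupleVal p a (Fin.tail I) :=
      le_antisymm (hL' _) (hI' _)
    -- the head of L minimizes i ↦ a i + p^(i+1) * m
    have hhead : ∀ i : Fin N,
        a (L 0) + p ^ ((L 0 : ℕ) + 1) * tupleVal p a (Fin.tail I) ≤
        a i + p ^ ((i : ℕ) + 1) * tupleVal p a (Fin.tail I) := by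
      intro i
      rcases hL 0 with h0 | h0 <;> rw [h0]
      · have h := hI (Fin.cons i (Fin.tail I))
        rwa [tupleVal_cons, tupleVal_cons, Fin.cons_zero, Fin.tail_cons] at h
      · have h := hJ (Fin.cons i (Fin.tail I))
        rwa [tupleVal_cons, tupleVal_cons, Fin.cons_zero, Fin.tail_cons, hJI] at h
    rw [tupleVal_cons p a L, tupleVal_cons p a K, hLt]
    calc a (L 0) + p ^ ((L 0 : ℕ) + 1) * tupleVal p a (Fin.tail I)
        ≤ a (K 0) + p ^ ((K 0 : ℕ) + 1) * tupleVal p a (Fin.tail I) := hhead (K 0)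
      _ ≤ a (K 0) + p ^ ((K 0 : ℕ) + 1) * tupleVal p a (Fin.tail K) :=
          Nat.add_le_add_left (Nat.mul_le_mul_left _ (hI' _)) _

/-- If `I` and `J` both minimize `ν` over `{1,…,N}^r`, then so does every
componentwise mixture `L` (each `L α` being either `I α` or `J α`). -/
theorem mixture_of_minimizers_is_minimizer
    (p N r : ℕ) (hp : 2 ≤ p) (hN : 2 ≤ N) (hr : 1 ≤ r)
    (a : Fin N → ℕ) (ha : ∀ i, 0 < a i)
    (I J : Fin r → Fin N)
    (hI : ∀ K : Fin r → Fin N, tupleVal p a I ≤ tupleVal p a K)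
    (hJ : ∀ K : Fin r → Fin N, tupleVal p a J ≤ tupleVal p a K)
    (L : Fin r → Fin N) (hL : ∀ α : Fin r, L α = I α ∨ L α = J α) :
    ∀ K : Fin r → Fin N, tupleVal p a L ≤ tupleVal p a K :=
  key p (by omega) a r I J hI hJ L hL
end
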